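/- arXiv:1207.5653 — 3 statements merged into one kernel-verified Lean document; each statement's English description precedes it below -/
import Mathlib

section
/- Under Assumptions A1 and A2, for each i = 1, …, J one has limsup_{n→∞} (1/n} ln ℙ₀(θ̂ⁿ = θ_i) ≤ −inf_{y ∈ ℝ₊^J} Λ^(i),*(y); equivalently, ℙ₀(θ̂ⁿ = θ_i) ≤ exp{−n·inf_{y ∈ ℝ₊^J} Λ^(i),*(y) − o_sup(n)} where limsup_{n→∞} o_sup(n)/n = 0. -/
open MeasureTheory ProbabilityTheory Filter
open scoped ENNReal NNReal

/-- The logarithmic moment generating function `Λ^(i)(λ) = ln E₀ exp⟨λ, X^(i)⟩` of the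
vector `X^(i) = (ln q(Y;θᵢ) − ln q(Y;θⱼ))_{j ≠ i}` under the true law `ν`, with values
in the extended reals. -/
noncomputable def logMGF {𝔜 : Type*} [MeasurableSpace 𝔜] {J : ℕ}
    (ν : Measure 𝔜) (q : Fin (J + 1) → 𝔜 → ℝ) (i : Fin (J + 1))
    (lam : {j : Fin (J + 1) // j ≠ i} → ℝ) : EReal :=
  ENNReal.log (∫⁻ y, ENNReal.ofReal
    (Real.exp (∑ j : {j : Fin (J + 1) // j ≠ i},
      lam j * (Real.log (q i y) - Real.log (q j.1 y)))) ∂ν)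

/-- The Cramér transform `Λ^(i),*(y) = sup_λ (⟨y, λ⟩ − Λ^(i)(λ))`. -/
noncomputable def cramerTransform {𝔜 : Type*} [MeasurableSpace 𝔜] {J : ℕ}
    (ν : Measure 𝔜) (q : Fin (J + 1) → 𝔜 → ℝ) (i : Fin (J + 1))
    (y : {j : Fin (J + 1) // j ≠ i} → ℝ) : EReal :=
  ⨆ lam : {j : Fin (J + 1) // j ≠ i} → ℝ,
    (((∑ j : {j : Fin (J + 1) // j ≠ i}, y j * lam j : ℝ) : EReal) - logMGF ν q i lam)

/-- The nonnegative orthant `ℝ₊^J`. -/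
def orthant {κ : Type*} : Set (κ → ℝ) := {v | ∀ j, 0 ≤ v j}

/-!
For every `λ ≥ 0`, Chernoff's bound gives `ℙ₀(θ̂ⁿ = θᵢ) ≤ ℙ₀(∑ₖ X_k^(i) ∈ ℝ₊^J) ≤ exp (n Λ^(i)(λ))`,
so the limsup is at most `inf_{λ ≥ 0} Λ^(i)(λ)`. This is at most `-inf_{y ≥ 0} Λ^(i),*(y)` by convex
duality. `Λ^(i)` is convex by Hölder's inequality and bounded near `0` by A2, so for any
`c < inf_{λ ≥ 0} Λ^(i)(λ)` its epigraph has an interior point above `0`, and that interior misses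
`ℝ₊^J × (-∞, c)`. A Hahn–Banach hyperplane separating the two is the graph of an affine minorant
`c + ⟨y, ·⟩` of `Λ^(i)` with `y ≥ 0`, that is, `Λ^(i),*(y) ≤ -c`.
-/

theorem ENNReal.log_le_coe_iff {x : ℝ≥0∞} {t : ℝ} :
    ENNReal.log x ≤ t ↔ x ≤ ENNReal.ofReal (Real.exp t) := by
  rw [← ENNReal.log_le_log_iff, ENNReal.log_ofReal_of_pos (Real.exp_pos t), Real.log_exp]

theorem ENNReal.ofReal_exp_add (a b x y : ℝ) :
    ENNReal.ofReal (Real.exp (a * x + b * y)) =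
      ENNReal.ofReal (Real.exp x) ^ a * ENNReal.ofReal (Real.exp y) ^ b := by
  rw [ENNReal.ofReal_rpow_of_pos (Real.exp_pos x), ENNReal.ofReal_rpow_of_pos (Real.exp_pos y),
    ← ENNReal.ofReal_mul (by positivity), ← Real.exp_mul, ← Real.exp_mul, ← Real.exp_add,
    mul_comm x, mul_comm y]

theorem EReal.coe_sub_le_neg_of_forall_le {z c : ℝ} {L : EReal}
    (h : ∀ t : ℝ, L ≤ t → c + z ≤ t) : (z : EReal) - L ≤ -(c : EReal) := by
  induction L using EReal.rec with
  | bot => linarith [h (c + z - 1) bot_le]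
  | coe L =>
    rw [← EReal.coe_sub, ← EReal.coe_neg, EReal.coe_le_coe_iff]
    linarith [h L le_rfl]
  | top => simp

theorem limsup_inv_mul_log_le_log {u : ℕ → ℝ≥0∞} {I : ℝ≥0∞} (h : ∀ n, u n ≤ I ^ n) :
    limsup (fun n : ℕ => (((n : ℝ)⁻¹ : ℝ) : EReal) * ENNReal.log (u n)) atTop ≤
      ENNReal.log I := by
  refine limsup_le_of_le (by isBoundedDefault) (eventually_atTop.2 ⟨1, fun n hn => ?_⟩)
  have hn' : ((n : ℝ)⁻¹ : ℝ) * (n : ℝ) = 1 := inv_mul_cancel₀ (by positivity)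
  calc (((n : ℝ)⁻¹ : ℝ) : EReal) * ENNReal.log (u n)
      ≤ (((n : ℝ)⁻¹ : ℝ) : EReal) * ((n : ℝ) * ENNReal.log I) := by
        rw [EReal.coe_natCast, ← ENNReal.log_pow]
        gcongr
        exact h n
    _ = ENNReal.log I := by rw [← mul_assoc, ← EReal.coe_mul, hn', EReal.coe_one, one_mul]

theorem nonneg_of_forall_le_mul {b w : ℝ} (h : ∀ T : ℝ, 0 ≤ T → b ≤ T * w) : 0 ≤ w := by
  by_contra! hw
  have hT := h ((|b| + 1) / -w) (div_nonneg (by positivity) (neg_nonneg.2 hw.le))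
  have hTw : (|b| + 1) / -w * w = -(|b| + 1) := by
    rw [div_mul_eq_mul_div, div_neg, mul_div_cancel_right₀ _ hw.ne]
  linarith [neg_abs_le b]

theorem geometric_hahn_banach_of_mem_interior {E : Type*} [TopologicalSpace E]
    [AddCommGroup E] [IsTopologicalAddGroup E] [Module ℝ E] [ContinuousSMul ℝ E]
    {s t : Set E} (hs : Convex ℝ s) (ht : Convex ℝ t) (hst : Disjoint (interior s) t)
    {x₀ : E} (hx₀ : x₀ ∈ interior s) :
    ∃ (f : StrongDual ℝ E) (u : ℝ), (∀ a ∈ s, f a ≤ u) ∧ f x₀ < u ∧ ∀ b ∈ t, u ≤ f b := by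
  obtain ⟨f, u, hfs, hft⟩ := geometric_hahn_banach_open hs.interior isOpen_interior ht hst
  refine ⟨f, u, fun a ha => ?_, hfs x₀ hx₀, hft⟩
  refine closure_minimal (fun x hx => (hfs x hx).le) (isClosed_le f.continuous continuous_const) ?_
  rw [hs.closure_interior_eq_closure_of_nonempty_interior ⟨x₀, hx₀⟩]
  exact subset_closure ha

theorem orthant_eq_Ici {κ : Type*} : (orthant : Set (κ → ℝ)) = Set.Ici 0 := by
  ext v
  simp [orthant, Pi.le_def]

section Orthant

variable {κ : Type*} [Fintype κ]

theorem StrongDual.exists_apply_eq_sum_mul_add_mul (f : StrongDual ℝ ((κ → ℝ) × ℝ)) :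
    ∃ (w : κ → ℝ) (a : ℝ), ∀ l t, f (l, t) = ∑ j, w j * l j + a * t := by
  classical
  set g : (κ → ℝ) →ₗ[ℝ] ℝ := (f.comp (ContinuousLinearMap.inl ℝ (κ → ℝ) ℝ)).toLinearMap
  refine ⟨fun j => g fun k => if j = k then 1 else 0, f (0, 1), fun l t => ?_⟩
  calc f (l, t) = f ((l, 0) + t • ((0 : κ → ℝ), (1 : ℝ))) := by congr 1; ext <;> simp
    _ = g l + f (0, 1) * t := by rw [map_add, map_smul, smul_eq_mul, mul_comm]; rfl
    _ = _ := by simp only [g.pi_apply_eq_sum_univ l, smul_eq_mul, mul_comm]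

theorem Convex.exists_orthant_affine_minorant {E : Set ((κ → ℝ) × ℝ)} (hE : Convex ℝ E)
    {t₀ : ℝ} (h₀ : ((0 : κ → ℝ), t₀) ∈ interior E) {c : ℝ}
    (hc : ∀ p ∈ E, p.1 ∈ orthant → c ≤ p.2) :
    ∃ y ∈ orthant, ∀ p ∈ E, c + ∑ j, y j * p.1 j ≤ p.2 := by
  classical
  have hdisj : Disjoint (interior E) ((orthant : Set (κ → ℝ)) ×ˢ Set.Iio c) :=
    Set.disjoint_left.2 fun p hpE hpB => (hc p (interior_subset hpE) hpB.1).not_gt hpB.2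
  obtain ⟨f, u, hfE, hf₀, hfB⟩ := geometric_hahn_banach_of_mem_interior hE
    ((orthant_eq_Ici (κ := κ) ▸ convex_Ici 0).prod (convex_Iio c)) hdisj h₀
  obtain ⟨w, a, hf⟩ := f.exists_apply_eq_sum_mul_add_mul
  have hB : ∀ l ∈ orthant, ∀ t < c, u ≤ ∑ j, w j * l j + a * t := fun l hl t ht =>
    hf l t ▸ hfB (l, t) ⟨hl, ht⟩
  have hB₀ : ∀ t < c, u ≤ a * t := fun t ht => by simpa using hB 0 (fun _ => le_rfl) t ht
  -- `(0, t₀)` and `(0, min t₀ (c - 1))` are separated, so the hyperplane is not vertical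
  have ha : a < 0 := by
    by_contra! ha
    have h₁ := hB₀ (min t₀ (c - 1)) (by linarith [min_le_right t₀ (c - 1)])
    have h₂ := mul_le_mul_of_nonneg_left (min_le_left t₀ (c - 1)) ha
    simp only [hf, Pi.zero_apply, mul_zero, Finset.sum_const_zero, zero_add] at hf₀
    linarith
  have hu : u ≤ a * c := by
    have : c ≤ u / a := le_of_forall_lt_imp_le_of_dense fun t ht =>
      (le_div_iff_of_neg ha).2 (mul_comm a t ▸ hB₀ t ht)
    linarith [(le_div_iff_of_neg ha).1 this]
  have hw : ∀ j, 0 ≤ w j := fun j => nonneg_of_forall_le_mul (b := u - a * (c - 1)) fun T hT => by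
    have := hB (Pi.single j T) (fun k => by by_cases h : k = j <;> simp [h, hT]) (c - 1)
      (by linarith)
    simp only [Pi.single_apply, mul_ite, mul_zero, Finset.sum_ite_eq', Finset.mem_univ,
      if_true] at this
    linarith
  refine ⟨fun j => w j / -a, fun j => div_nonneg (hw j) (by linarith), fun p hp => ?_⟩
  have hsum : ∑ j, w j / -a * p.1 j = (∑ j, w j * p.1 j) / -a := by
    rw [Finset.sum_div]
    exact Finset.sum_congr rfl fun j _ => by ring
  have := hf p.1 p.2 ▸ hfE p hp
  have : (∑ j, w j * p.1 j) / -a ≤ p.2 - c := (div_le_iff₀ (by linarith)).2 (by nlinarith)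
  linarith

theorem iInf_orthant_le_neg_iInf_orthant_conjugate {Λ : (κ → ℝ) → EReal}
    (hΛ : Convex ℝ {p : (κ → ℝ) × ℝ | Λ p.1 ≤ p.2}) {t₀ : ℝ}
    (h₀ : ((0 : κ → ℝ), t₀) ∈ interior {p : (κ → ℝ) × ℝ | Λ p.1 ≤ p.2}) :
    ⨅ l ∈ (orthant : Set (κ → ℝ)), Λ l ≤
      -⨅ y ∈ (orthant : Set (κ → ℝ)), ⨆ l, ((∑ j, y j * l j : ℝ) : EReal) - Λ l := by
  refine EReal.ge_of_forall_gt_iff_ge.1 fun c hc => EReal.le_neg_of_le_neg ?_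
  have hcΛ : ∀ p ∈ {p : (κ → ℝ) × ℝ | Λ p.1 ≤ p.2}, p.1 ∈ orthant → c ≤ p.2 :=
    fun p hp hp₁ => EReal.coe_le_coe_iff.1 (hc.le.trans ((iInf₂_le p.1 hp₁).trans hp))
  obtain ⟨y, hy, hyE⟩ := hΛ.exists_orthant_affine_minorant h₀ hcΛ
  exact iInf₂_le_of_le y hy
    (iSup_le fun l => EReal.coe_sub_le_neg_of_forall_le fun t ht => hyE (l, t) ht)

end Orthant

section LogLaplace

variable {𝔜 κ : Type*} [MeasurableSpace 𝔜] [Fintype κ]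

noncomputable def logLaplace (ν : Measure 𝔜) (X : 𝔜 → κ → ℝ) (l : κ → ℝ) : EReal :=
  ENNReal.log (∫⁻ x, ENNReal.ofReal (Real.exp (∑ j, l j * X x j)) ∂ν)

theorem lintegral_pi_prod_eq_pow {ι : Type*} [Fintype ι] (ν : Measure 𝔜) [IsProbabilityMeasure ν]
    {f : 𝔜 → ℝ≥0∞} (hf : Measurable f) :
    ∫⁻ y : ι → 𝔜, ∏ k, f (y k) ∂Measure.pi (fun _ => ν) = (∫⁻ x, f x ∂ν) ^ Fintype.card ι := by
  have h := lintegral_prod_eq_prod_lintegral_of_indepFun Finset.univ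
    (fun k (y : ι → 𝔜) => f (y k)) (iIndepFun_pi (μ := fun _ : ι => ν) fun _ => hf.aemeasurable)
    fun k => hf.comp (measurable_pi_apply k)
  simp [h, (measurePreserving_eval (fun _ : ι => ν) _).lintegral_comp hf]

theorem measure_pi_sum_mem_orthant_le (ν : Measure 𝔜) [IsProbabilityMeasure ν]
    {X : 𝔜 → κ → ℝ} (hX : Measurable X) {l : κ → ℝ} (hl : l ∈ orthant) (n : ℕ) :
    Measure.pi (fun _ : Fin n => ν) {y | (fun j => ∑ k, X (y k) j) ∈ orthant} ≤
      (∫⁻ x, ENNReal.ofReal (Real.exp (∑ j, l j * X x j)) ∂ν) ^ n := by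
  set f : 𝔜 → ℝ≥0∞ := fun x => ENNReal.ofReal (Real.exp (∑ j, l j * X x j))
  have hf : Measurable f := by fun_prop
  have hone : {y : Fin n → 𝔜 | (fun j => ∑ k, X (y k) j) ∈ orthant} ⊆ {y | 1 ≤ ∏ k, f (y k)} := by
    intro y hy
    rw [Set.mem_ofPred_eq, ← ENNReal.ofReal_prod_of_nonneg fun k _ => (Real.exp_pos _).le,
      ← Real.exp_sum, Finset.sum_comm, ENNReal.one_le_ofReal, Real.one_le_exp_iff]
    refine Finset.sum_nonneg fun j _ => ?_
    rw [← Finset.mul_sum]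
    exact mul_nonneg (hl j) (hy j)
  calc _ ≤ Measure.pi (fun _ : Fin n => ν) {y | 1 ≤ ∏ k, f (y k)} := measure_mono hone
    _ ≤ ∫⁻ y, ∏ k, f (y k) ∂Measure.pi (fun _ => ν) := by
      simpa using mul_meas_ge_le_lintegral₀
        (Finset.measurable_prod _ fun k _ => hf.comp (measurable_pi_apply k)).aemeasurable 1
    _ = _ := by rw [lintegral_pi_prod_eq_pow ν hf, Fintype.card_fin]

theorem lintegral_ofReal_exp_add_le (ν : Measure 𝔜) {f g : 𝔜 → ℝ} (hf : Measurable f)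
    (hg : Measurable g) {a b : ℝ} (ha : 0 ≤ a) (hb : 0 ≤ b) (hab : a + b = 1) :
    ∫⁻ x, ENNReal.ofReal (Real.exp (a * f x + b * g x)) ∂ν ≤
      (∫⁻ x, ENNReal.ofReal (Real.exp (f x)) ∂ν) ^ a *
        (∫⁻ x, ENNReal.ofReal (Real.exp (g x)) ∂ν) ^ b := by
  have holder := ENNReal.lintegral_prod_norm_pow_le (μ := ν) Finset.univ
    (f := ![fun x => ENNReal.ofReal (Real.exp (f x)), fun x => ENNReal.ofReal (Real.exp (g x))])
    (p := ![a, b]) (by intro i _; fin_cases i <;> simp <;> fun_prop)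
    (by simpa using hab) (by intro i _; fin_cases i <;> simpa)
  simp only [Fin.prod_univ_two, Matrix.cons_val_zero, Matrix.cons_val_one] at holder
  simpa only [ENNReal.ofReal_exp_add] using holder

theorem convex_epigraph_logLaplace (ν : Measure 𝔜) {X : 𝔜 → κ → ℝ} (hX : Measurable X) :
    Convex ℝ {p : (κ → ℝ) × ℝ | logLaplace ν X p.1 ≤ p.2} := by
  rintro ⟨l, s⟩ hs ⟨m, t⟩ ht a b ha hb hab
  simp only [Set.mem_ofPred_eq, logLaplace, ENNReal.log_le_coe_iff] at hs ht ⊢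
  calc ∫⁻ x, ENNReal.ofReal (Real.exp (∑ j, (a • (l, s) + b • (m, t)).1 j * X x j)) ∂ν
      = ∫⁻ x, ENNReal.ofReal
          (Real.exp (a * ∑ j, l j * X x j + b * ∑ j, m j * X x j)) ∂ν := by
        simp only [Prod.fst_add, Prod.smul_fst, Pi.add_apply, Pi.smul_apply, smul_eq_mul,
          Finset.mul_sum, add_mul, mul_assoc, Finset.sum_add_distrib]
    _ ≤ (∫⁻ x, ENNReal.ofReal (Real.exp (∑ j, l j * X x j)) ∂ν) ^ a *
        (∫⁻ x, ENNReal.ofReal (Real.exp (∑ j, m j * X x j)) ∂ν) ^ b :=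
      lintegral_ofReal_exp_add_le ν (by fun_prop) (by fun_prop) ha hb hab
    _ ≤ ENNReal.ofReal (Real.exp s) ^ a * ENNReal.ofReal (Real.exp t) ^ b := by gcongr
    _ = ENNReal.ofReal (Real.exp (a • (l, s) + b • (m, t)).2) := by
      simp [ENNReal.ofReal_exp_add]

theorem Real.exp_sum_mul_le {l x : κ → ℝ} {s : ℝ} (hl : ∑ j, |l j| ≤ s) :
    Real.exp (∑ j, l j * x j) ≤ 1 + ∑ j, (Real.exp (s * x j) + Real.exp (-s * x j)) := by
  rcases isEmpty_or_nonempty κ with hκ | hκ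
  · simp
  obtain ⟨j₀, hj₀⟩ := Finite.exists_max fun j => |x j|
  have hsum : ∑ j, l j * x j ≤ s * |x j₀| :=
    calc ∑ j, l j * x j ≤ ∑ j, |l j| * |x j₀| := Finset.sum_le_sum fun j _ =>
          (le_abs_self _).trans (abs_mul (l j) (x j) ▸
            mul_le_mul_of_nonneg_left (hj₀ j) (abs_nonneg _))
      _ ≤ s * |x j₀| := by rw [← Finset.sum_mul]; exact mul_le_mul_of_nonneg_right hl (abs_nonneg _)
  have hmax : Real.exp (s * |x j₀|) ≤ Real.exp (s * x j₀) + Real.exp (-s * x j₀) := by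
    rcases abs_choice (x j₀) with h | h <;> rw [h] <;> simp only [neg_mul, mul_neg] <;>
      linarith [Real.exp_pos (s * x j₀), Real.exp_pos (-(s * x j₀))]
  calc Real.exp (∑ j, l j * x j) ≤ Real.exp (s * |x j₀|) := Real.exp_le_exp.2 hsum
    _ ≤ ∑ j, (Real.exp (s * x j) + Real.exp (-s * x j)) :=
      hmax.trans (Finset.single_le_sum (f := fun j => Real.exp (s * x j) + Real.exp (-s * x j))
        (fun j _ => by positivity) (Finset.mem_univ j₀))
    _ ≤ _ := le_add_of_nonneg_left zero_le_one

theorem exists_logLaplace_le_of_sum_abs_le (ν : Measure 𝔜) [IsFiniteMeasure ν]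
    {X : 𝔜 → κ → ℝ} (hX : Measurable X) {s : ℝ}
    (hpos : ∀ j, ∫⁻ x, ENNReal.ofReal (Real.exp (s * X x j)) ∂ν < ⊤)
    (hneg : ∀ j, ∫⁻ x, ENNReal.ofReal (Real.exp (-s * X x j)) ∂ν < ⊤) :
    ∃ C : ℝ, ∀ l : κ → ℝ, ∑ j, |l j| ≤ s → logLaplace ν X l ≤ C := by
  set F : 𝔜 → ℝ≥0∞ := fun x => 1 + ∑ j, (ENNReal.ofReal (Real.exp (s * X x j)) +
    ENNReal.ofReal (Real.exp (-s * X x j)))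
  have hF : ∫⁻ x, F x ∂ν ≠ ⊤ := by
    rw [lintegral_add_left measurable_const, lintegral_finsetSum _ (fun j _ => by fun_prop)]
    refine ENNReal.add_ne_top.2 ⟨by simp, ENNReal.sum_ne_top.2 fun j _ => ?_⟩
    rw [lintegral_add_left (by fun_prop)]
    exact ENNReal.add_ne_top.2 ⟨(hpos j).ne, (hneg j).ne⟩
  refine ⟨(∫⁻ x, F x ∂ν).toReal, fun l hl => ENNReal.log_le_coe_iff.2 ?_⟩
  calc ∫⁻ x, ENNReal.ofReal (Real.exp (∑ j, l j * X x j)) ∂ν ≤ ∫⁻ x, F x ∂ν := by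
        refine lintegral_mono fun x => (ENNReal.ofReal_le_ofReal (Real.exp_sum_mul_le hl)).trans ?_
        simp only [F]
        rw [ENNReal.ofReal_add zero_le_one (by positivity), ENNReal.ofReal_one,
          ENNReal.ofReal_sum_of_nonneg fun j _ => by positivity]
        gcongr
        rw [ENNReal.ofReal_add (by positivity) (by positivity)]
    _ = ENNReal.ofReal (∫⁻ x, F x ∂ν).toReal := (ENNReal.ofReal_toReal hF).symm
    _ ≤ _ := ENNReal.ofReal_le_ofReal (by linarith [Real.add_one_le_exp (∫⁻ x, F x ∂ν).toReal])

theorem exists_mem_interior_epigraph_logLaplace (ν : Measure 𝔜) [IsFiniteMeasure ν]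
    {X : 𝔜 → κ → ℝ} (hX : Measurable X) {s : ℝ} (hs : 0 < s)
    (hpos : ∀ j, ∫⁻ x, ENNReal.ofReal (Real.exp (s * X x j)) ∂ν < ⊤)
    (hneg : ∀ j, ∫⁻ x, ENNReal.ofReal (Real.exp (-s * X x j)) ∂ν < ⊤) :
    ∃ t₀ : ℝ, ((0 : κ → ℝ), t₀) ∈ interior {p : (κ → ℝ) × ℝ | logLaplace ν X p.1 ≤ p.2} := by
  obtain ⟨C, hC⟩ := exists_logLaplace_le_of_sum_abs_le ν hX hpos hneg
  refine ⟨C + 1, mem_interior.2 ⟨{l | ∑ j, |l j| < s} ×ˢ Set.Ioi C, ?_, ?_, by simp [hs]⟩⟩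
  · rintro ⟨l, t⟩ ⟨hl, ht⟩
    exact (hC l (le_of_lt hl)).trans (EReal.coe_le_coe_iff.2 (le_of_lt ht))
  · exact (isOpen_lt (by fun_prop) continuous_const).prod isOpen_Ioi

end LogLaplace

theorem upper_bound_prob_m_estimator_general
    {𝔜 : Type*} [MeasurableSpace 𝔜] {J : ℕ}
    (ν : Measure 𝔜) [IsProbabilityMeasure ν]
    (q : Fin (J + 1) → 𝔜 → ℝ)
    (hq_meas : ∀ θ, Measurable (q θ))
    (hq_pos : ∀ θ y, 0 < q θ y)
    -- A2: finiteness of the moment generating functions of the log likelihood ratios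
    -- in a neighborhood of zero
    (hA2 : ∃ δ : ℝ, 0 < δ ∧ ∀ η ∈ Set.Ioo (-δ) δ, ∀ j k : Fin (J + 1),
      (∫⁻ y, ENNReal.ofReal ((q j y / q k y) ^ η) ∂ν) < ⊤)
    -- the m-estimator: est n maximizes Qₙ over the parameter space
    (est : (n : ℕ) → (Fin n → 𝔜) → Fin (J + 1))
    (i : Fin (J + 1))
    -- the event {θ̂ⁿ = θᵢ} equals {∑ₖ X_k^(i) ∈ int ℝ₊^J}
    (hest_event : ∀ n, {y : Fin n → 𝔜 | est n y = i} =
      {y : Fin n → 𝔜 | (fun j : {j : Fin (J + 1) // j ≠ i} =>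
          ∑ k, (Real.log (q i (y k)) - Real.log (q j.1 (y k)))) ∈ interior orthant}) :
    Filter.limsup
      (fun n : ℕ => (((n : ℝ)⁻¹ : ℝ) : EReal) *
        ENNReal.log ((Measure.pi fun _ : Fin n => ν) {y | est n y = i}))
      atTop
    ≤ -(⨅ y ∈ (orthant : Set ({j : Fin (J + 1) // j ≠ i} → ℝ)),
        cramerTransform ν q i y) := by
  set X : 𝔜 → {j : Fin (J + 1) // j ≠ i} → ℝ := fun x j => Real.log (q i x) - Real.log (q j.1 x)
  have hX : Measurable X := measurable_pi_lambda _ fun j => (hq_meas i).log.sub (hq_meas j.1).log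
  obtain ⟨δ, hδ, hA2⟩ := hA2
  have hmgf : ∀ η ∈ Set.Ioo (-δ) δ, ∀ j, ∫⁻ x, ENNReal.ofReal (Real.exp (η * X x j)) ∂ν < ⊤ := by
    intro η hη j
    convert hA2 η hη i j.1 using 4 with x
    rw [Real.rpow_def_of_pos (div_pos (hq_pos i x) (hq_pos j.1 x)),
      Real.log_div (hq_pos i x).ne' (hq_pos j.1 x).ne', mul_comm]
  obtain ⟨t₀, ht₀⟩ := exists_mem_interior_epigraph_logLaplace ν hX (half_pos hδ)
    (hmgf _ ⟨by linarith, by linarith⟩) (hmgf _ ⟨by linarith, by linarith⟩)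
  have hevent : ∀ n, {y | est n y = i} ⊆ {y | (fun j => ∑ k, X (y k) j) ∈ orthant} :=
    fun n => (hest_event n).subset.trans fun _ hy => interior_subset (s := orthant) hy
  calc _ ≤ ⨅ l ∈ orthant, logLaplace ν X l := le_iInf₂ fun l hl => limsup_inv_mul_log_le_log
        fun n => (measure_mono (hevent n)).trans (measure_pi_sum_mem_orthant_le ν hX hl n)
    -- `cramerTransform ν q i` is, by definition, the convex conjugate of `logLaplace ν X`
    _ ≤ _ := iInf_orthant_le_neg_iInf_orthant_conjugate (convex_epigraph_logLaplace ν hX) ht₀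

/-- **Large deviations upper bound for the m-estimator** (Proposition 2(ii)).
Under Assumptions A1 and A2, for each `i ≠ 0`,
`limsup (1/n) ln ℙ₀(θ̂ⁿ = θᵢ) ≤ − inf_{y ∈ ℝ₊^J} Λ^(i),*(y)`. -/
theorem upper_bound_prob_m_estimator
    {𝔜 : Type*} [MeasurableSpace 𝔜] {J : ℕ}
    (ν : Measure 𝔜) [IsProbabilityMeasure ν]
    (q : Fin (J + 1) → 𝔜 → ℝ)
    (hq_meas : ∀ θ, Measurable (q θ))
    (hq_pos : ∀ θ y, 0 < q θ y)
    (hq_int : ∀ θ, Integrable (fun y => Real.log (q θ y)) ν)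
    (hq_ident : ∀ θ, θ ≠ 0 → ∫ y, Real.log (q θ y) ∂ν < ∫ y, Real.log (q 0 y) ∂ν)
    -- A2: finiteness of the moment generating functions of the log likelihood ratios
    -- in a neighborhood of zero
    (hA2 : ∃ δ : ℝ, 0 < δ ∧ ∀ η ∈ Set.Ioo (-δ) δ, ∀ j k : Fin (J + 1),
      (∫⁻ y, ENNReal.ofReal ((q j y / q k y) ^ η) ∂ν) < ⊤)
    -- the m-estimator: est n maximizes Qₙ over the parameter space
    (est : (n : ℕ) → (Fin n → 𝔜) → Fin (J + 1))
    (hest_meas : ∀ n, Measurable (est n))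
    (hest_max : ∀ n (y : Fin n → 𝔜) (θ : Fin (J + 1)),
      ∑ k, Real.log (q θ (y k)) ≤ ∑ k, Real.log (q (est n y) (y k)))
    (i : Fin (J + 1)) (hi : i ≠ 0)
    -- the event {θ̂ⁿ = θᵢ} equals {∑ₖ X_k^(i) ∈ int ℝ₊^J}
    (hest_event : ∀ n, {y : Fin n → 𝔜 | est n y = i} =
      {y : Fin n → 𝔜 | (fun j : {j : Fin (J + 1) // j ≠ i} =>
          ∑ k, (Real.log (q i (y k)) - Real.log (q j.1 (y k)))) ∈ interior orthant}) :
    Filter.limsup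
      (fun n : ℕ => (((n : ℝ)⁻¹ : ℝ) : EReal) *
        ENNReal.log ((Measure.pi fun _ : Fin n => ν) {y | est n y = i}))
      atTop
    ≤ -(⨅ y ∈ (orthant : Set ({j : Fin (J + 1) // j ≠ i} → ℝ)),
        cramerTransform ν q i y) :=
  upper_bound_prob_m_estimator_general ν q hq_meas hq_pos hA2 est i hest_event
end

section
/- Under Assumptions A7 and A9, if θ̃ⁿ is a strongly consistent estimator (θ̃ⁿ → θ ℙ_θ-almost surely for every θ ∈ Θ when the data are i.i.d. with law ℙ_θ), then liminf_{n→∞} (1/n) ln ℙ_{θ₀}(θ̃ⁿ ≠ θ₀) ≥ sup_{θ₁ ∈ Θ∖{θ₀}} E_{θ₁} ln( f_Y(Y; θ₀)/f_Y(Y; θ₁) ), i.e. the rate of decay of the zero–one risk R₁(θ̃ⁿ, θ₀) is bounded below by minus the minimal Kullback–Leibler divergence min_{θ₁ ≠ θ₀} KL(ℙ_{θ₁} ‖ ℙ_{θ₀}). -/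
open MeasureTheory ProbabilityTheory Filter
open scoped ENNReal NNReal

open scoped Topology

/-- The probability measure with density `f θ` with respect to `μ` (Assumption A7). -/
noncomputable def densModel {𝔜 Θ : Type*} [MeasurableSpace 𝔜]
    (μ : Measure 𝔜) (f : Θ → 𝔜 → ℝ) (θ : Θ) : Measure 𝔜 :=
  μ.withDensity fun y => ENNReal.ofReal (f θ y)

/-- The extended-real-valued expectation `E_ρ[g]`, defined as the difference of the
Lebesgue integrals of the positive and negative parts (so that e.g. `E = −∞` is
meaningful). -/
noncomputable def extExp {𝔜 : Type*} [MeasurableSpace 𝔜]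
    (ρ : Measure 𝔜) (g : 𝔜 → ℝ) : EReal :=
  ((∫⁻ y, ENNReal.ofReal (g y) ∂ρ : ℝ≥0∞) : EReal) -
    ((∫⁻ y, ENNReal.ofReal (-g y) ∂ρ : ℝ≥0∞) : EReal)

/-!
Fix `θ₁ ≠ θ₀` and put `g = log (f θ₀ / f θ₁)`, so that `ℙ_θ₀ = e^g • ℙ_θ₁` and, for the first
`n` observations, the law of the sample under `θ₀` has density `e^{Sₙ}`, `Sₙ = ∑ᵢ g(Yᵢ)`, with
respect to its law under `θ₁`. Under `ℙ_θ₁`, consistency makes `{θ̃ⁿ ≠ θ₀}` eventually sure and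
the strong law makes `{Sₙ ≥ n a}` eventually sure for every `a < E_θ₁ g`; on the intersection the
density is at least `e^{na}`, so `ℙ_θ₀(θ̃ⁿ ≠ θ₀) ≥ e^{na} / 2` for large `n`. If `E_θ₁ g = −∞`
there is nothing to prove; otherwise `g` is integrable, its positive part being dominated by
`e^g`, whose `ℙ_θ₁`-integral is `1`.
-/

theorem MeasureTheory.Measure.pi_withDensity {ι : Type*} [Fintype ι] {α : ι → Type*}
    [∀ i, MeasurableSpace (α i)] {ρ : ∀ i, Measure (α i)} [∀ i, IsProbabilityMeasure (ρ i)]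
    {h : ∀ i, α i → ℝ≥0∞} (hh : ∀ i, Measurable (h i))
    [∀ i, SigmaFinite ((ρ i).withDensity (h i))] :
    Measure.pi (fun i => (ρ i).withDensity (h i))
      = (Measure.pi ρ).withDensity fun x => ∏ i, h i (x i) := by
  refine Measure.pi_eq fun s hs => ?_
  have hind : (Set.univ.pi s).indicator (fun x => ∏ i, h i (x i))
      = fun x => ∏ i, (s i).indicator (h i) (x i) := by
    ext x
    by_cases hx : ∀ i, x i ∈ s i <;> simp [Set.indicator, Finset.prod_ite_zero, hx]
  rw [withDensity_apply _ (.univ_pi hs), ← lintegral_indicator (.univ_pi hs), hind,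
    lintegral_prod_eq_prod_lintegral_of_indepFun _ _
      (iIndepFun_pi fun i => ((hh i).indicator (hs i)).aemeasurable)
      fun i => ((hh i).indicator (hs i)).comp (measurable_pi_apply i)]
  refine Finset.prod_congr rfl fun i _ => ?_
  rw [(measurePreserving_eval ρ i).lintegral_comp ((hh i).indicator (hs i)),
    lintegral_indicator (hs i), withDensity_apply _ (hs i)]

section WithDensity

variable {α : Type*} [MeasurableSpace α] {ρ : Measure α}

theorem exp_mul_measure_inter_le_withDensity {G : α → ℝ} (hG : Measurable G) {B : Set α}
    (hB : MeasurableSet B) (a : ℝ) :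
    ENNReal.ofReal (Real.exp a) * ρ (B ∩ {x | a ≤ G x})
      ≤ ρ.withDensity (fun x => ENNReal.ofReal (Real.exp (G x))) B := by
  calc ENNReal.ofReal (Real.exp a) * ρ (B ∩ {x | a ≤ G x})
      = ∫⁻ _ in B ∩ {x | a ≤ G x}, ENNReal.ofReal (Real.exp a) ∂ρ := (setLIntegral_const _ _).symm
    _ ≤ ∫⁻ x in B ∩ {x | a ≤ G x}, ENNReal.ofReal (Real.exp (G x)) ∂ρ :=
        setLIntegral_mono hG.exp.ennreal_ofReal fun x hx =>
          ENNReal.ofReal_le_ofReal (Real.exp_le_exp.mpr hx.2)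
    _ ≤ ∫⁻ x in B, ENNReal.ofReal (Real.exp (G x)) ∂ρ := lintegral_mono_set Set.inter_subset_left
    _ = _ := (withDensity_apply _ hB).symm

theorem lintegral_ofReal_le_withDensity_exp_univ (g : α → ℝ) :
    ∫⁻ y, ENNReal.ofReal (g y) ∂ρ
      ≤ ρ.withDensity (fun y => ENNReal.ofReal (Real.exp (g y))) .univ := by
  rw [withDensity_apply _ .univ, Measure.restrict_univ]
  exact lintegral_mono fun y => ENNReal.ofReal_le_ofReal (by linarith [Real.add_one_le_exp (g y)])

theorem integrable_of_lintegral_ofReal_ne_top {g : α → ℝ} (hg : AEStronglyMeasurable g ρ)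
    (hpos : ∫⁻ y, ENNReal.ofReal (g y) ∂ρ ≠ ⊤)
    (hneg : ∫⁻ y, ENNReal.ofReal (-g y) ∂ρ ≠ ⊤) : Integrable g ρ := by
  refine ⟨hg, (hasFiniteIntegral_iff_norm g).mpr ?_⟩
  have hnorm : ∀ y, ENNReal.ofReal ‖g y‖ ≤ ENNReal.ofReal (g y) + ENNReal.ofReal (-g y) := by
    intro y
    rcases le_total 0 (g y) with h | h
    · rw [Real.norm_of_nonneg h]; exact le_self_add
    · rw [Real.norm_of_nonpos h]; exact le_add_self
  calc ∫⁻ y, ENNReal.ofReal ‖g y‖ ∂ρ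
      ≤ ∫⁻ y, ENNReal.ofReal (g y) + ENNReal.ofReal (-g y) ∂ρ := lintegral_mono hnorm
    _ = (∫⁻ y, ENNReal.ofReal (g y) ∂ρ) + ∫⁻ y, ENNReal.ofReal (-g y) ∂ρ :=
        lintegral_add_left' hg.aemeasurable.ennreal_ofReal _
    _ < ⊤ := ENNReal.add_lt_top.mpr ⟨hpos.lt_top, hneg.lt_top⟩

theorem extExp_eq_bot {g : α → ℝ} (h : ∫⁻ y, ENNReal.ofReal (-g y) ∂ρ = ⊤) : extExp ρ g = ⊥ := by
  rw [extExp, h, EReal.coe_ennreal_top, EReal.sub_top]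

theorem extExp_eq_integral {g : α → ℝ} (hg : Integrable g ρ) : extExp ρ g = ∫ y, g y ∂ρ := by
  have hneg : ∫⁻ y, ENNReal.ofReal (-g y) ∂ρ ≠ ⊤ := hg.neg.lintegral_lt_top.ne
  rw [extExp, integral_eq_lintegral_pos_part_sub_lintegral_neg_part hg, EReal.coe_sub,
    EReal.coe_ennreal_toReal hg.lintegral_lt_top.ne, EReal.coe_ennreal_toReal hneg]

end WithDensity

theorem densModel_eq_withDensity_exp_log_div {𝔜 Θ : Type*} [MeasurableSpace 𝔜]
    (μ : Measure 𝔜) {f : Θ → 𝔜 → ℝ} (hf_meas : ∀ θ, Measurable (f θ))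
    (hf_pos : ∀ θ y, 0 < f θ y) (θ₀ θ₁ : Θ) :
    densModel μ f θ₀ = (densModel μ f θ₁).withDensity
      fun y => ENNReal.ofReal (Real.exp (Real.log (f θ₀ y / f θ₁ y))) := by
  have hratio : Measurable fun y => ENNReal.ofReal (Real.exp (Real.log (f θ₀ y / f θ₁ y))) :=
    ((hf_meas θ₀).div (hf_meas θ₁)).log.exp.ennreal_ofReal
  rw [densModel, densModel, ← withDensity_mul _ (hf_meas θ₁).ennreal_ofReal hratio]
  congr 1
  ext y
  rw [Pi.mul_apply, Real.exp_log (div_pos (hf_pos θ₀ y) (hf_pos θ₁ y)),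
    ← ENNReal.ofReal_mul (hf_pos θ₁ y).le, mul_div_cancel₀ _ (hf_pos θ₁ y).ne']

section IID

variable {Ω 𝔜 : Type*} [MeasurableSpace Ω] [MeasurableSpace 𝔜]

theorem ProbabilityTheory.iIndepFun.map_fun_fin_eq_pi {P : Measure Ω} {ρ : Measure 𝔜}
    {Y : ℕ → Ω → 𝔜} (hind : iIndepFun Y P) (hY : ∀ k, Measurable (Y k))
    (hlaw : ∀ k, P.map (Y k) = ρ) (n : ℕ) :
    P.map (fun ω (k : Fin n) => Y k ω) = Measure.pi fun _ => ρ := by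
  rw [iIndepFun.map_fun_eq_pi_map (f := fun k : Fin n => Y k) (fun k => (hY k).aemeasurable)
    (hind.precomp Fin.val_injective)]
  simp only [hlaw]

theorem exp_mul_measure_le_of_iIndepFun_withDensity {P Q : Measure Ω} {ρ : Measure 𝔜}
    {g : 𝔜 → ℝ} (hg : Measurable g) {Y : ℕ → Ω → 𝔜} (hY : ∀ k, Measurable (Y k))
    (hP_law : ∀ k, P.map (Y k) = ρ)
    (hQ_law : ∀ k, Q.map (Y k) = ρ.withDensity fun y => ENNReal.ofReal (Real.exp (g y)))
    (hP_indep : iIndepFun Y P) (hQ_indep : iIndepFun Y Q) (n : ℕ) {B : Set (Fin n → 𝔜)}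
    (hB : MeasurableSet B) (a : ℝ) :
    ENNReal.ofReal (Real.exp a)
        * P ((fun ω (k : Fin n) => Y k ω) ⁻¹' B ∩ {ω | a ≤ ∑ i ∈ Finset.range n, g (Y i ω)})
      ≤ Q ((fun ω (k : Fin n) => Y k ω) ⁻¹' B) := by
  have := hP_indep.isProbabilityMeasure
  have := hQ_indep.isProbabilityMeasure
  have : IsProbabilityMeasure ρ :=
    hP_law 0 ▸ Measure.isProbabilityMeasure_map (hY 0).aemeasurable
  have : IsProbabilityMeasure (ρ.withDensity fun y => ENNReal.ofReal (Real.exp (g y))) :=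
    hQ_law 0 ▸ Measure.isProbabilityMeasure_map (hY 0).aemeasurable
  have hvec : Measurable fun ω (k : Fin n) => Y k ω := measurable_pi_lambda _ fun k => hY k
  have hG : Measurable fun x : Fin n → 𝔜 => ∑ i, g (x i) :=
    Finset.measurable_sum _ fun i _ => hg.comp (measurable_pi_apply i)
  have hpre : (fun ω (k : Fin n) => Y k ω) ⁻¹' B ∩ {ω | a ≤ ∑ i ∈ Finset.range n, g (Y i ω)}
      = (fun ω (k : Fin n) => Y k ω) ⁻¹' (B ∩ {x | a ≤ ∑ i, g (x i)}) := by
    ext ω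
    simp [Fin.sum_univ_eq_sum_range (fun i => g (Y i ω))]
  have hprod : (fun x : Fin n → 𝔜 => ∏ i, ENNReal.ofReal (Real.exp (g (x i))))
      = fun x => ENNReal.ofReal (Real.exp (∑ i, g (x i))) := by
    ext x
    rw [Real.exp_sum, ENNReal.ofReal_prod_of_nonneg fun i _ => (Real.exp_pos _).le]
  rw [hpre, ← Measure.map_apply hvec (hB.inter (measurableSet_le measurable_const hG)),
    ← Measure.map_apply hvec hB, hP_indep.map_fun_fin_eq_pi hY hP_law,
    hQ_indep.map_fun_fin_eq_pi hY hQ_law,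
    Measure.pi_withDensity fun _ => hg.exp.ennreal_ofReal, hprod]
  exact exp_mul_measure_inter_le_withDensity hG hB a

theorem ae_tendsto_sum_range_comp_div {P : Measure Ω} {ρ : Measure 𝔜} {Y : ℕ → Ω → 𝔜}
    (hind : iIndepFun Y P) (hY : ∀ k, Measurable (Y k)) (hlaw : ∀ k, P.map (Y k) = ρ)
    {g : 𝔜 → ℝ} (hg : Measurable g) (hint : Integrable g ρ) :
    ∀ᵐ ω ∂P, Tendsto (fun n : ℕ => (∑ i ∈ Finset.range n, g (Y i ω)) / n) atTop
      (𝓝 (∫ y, g y ∂ρ)) := by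
  have hident : ∀ i, IdentDistrib (Y i) (Y 0) P P := fun i =>
    ⟨(hY i).aemeasurable, (hY 0).aemeasurable, by rw [hlaw, hlaw]⟩
  rw [← hlaw 0] at hint ⊢
  rw [integral_map (hY 0).aemeasurable hg.aestronglyMeasurable]
  exact strong_law_ae_real (fun i ω => g (Y i ω)) (hint.comp_measurable (hY 0))
    (fun i j hij => (hind.indepFun hij).comp hg hg) fun i => (hident i).comp hg

end IID

theorem le_liminf_inv_mul_log_of_le {p : ℕ → ℝ≥0∞} {a δ : ℝ} (hδ : 0 < δ)
    (h : ∀ᶠ n : ℕ in atTop, ENNReal.ofReal (δ * Real.exp (n * a)) ≤ p n) :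
    (a : EReal) ≤ liminf (fun n : ℕ => (((n : ℝ)⁻¹ : ℝ) : EReal) * ENNReal.log (p n)) atTop := by
  have hlim : Tendsto (fun n : ℕ => ((a + Real.log δ / n : ℝ) : EReal)) atTop (𝓝 (a : EReal)) := by
    rw [EReal.tendsto_coe]
    simpa using tendsto_const_nhds.add (tendsto_const_div_atTop_nhds_zero_nat (Real.log δ))
  rw [← hlim.liminf_eq]
  refine liminf_le_liminf ?_
  filter_upwards [h, eventually_ne_atTop 0] with n hn hn0
  have hpos : 0 < δ * Real.exp (n * a) := by positivity
  calc ((a + Real.log δ / n : ℝ) : EReal)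
      = (((n : ℝ)⁻¹ : ℝ) : EReal) * ENNReal.log (ENNReal.ofReal (δ * Real.exp (n * a))) := by
        rw [ENNReal.log_ofReal_of_pos hpos, ← EReal.coe_mul,
          Real.log_mul hδ.ne' (Real.exp_pos _).ne', Real.log_exp]
        congr 1
        field_simp
        ring
    _ ≤ (((n : ℝ)⁻¹ : ℝ) : EReal) * ENNReal.log (p n) :=
        mul_le_mul_of_nonneg_left (ENNReal.log_le_log hn)
          (EReal.coe_nonneg.mpr (inv_nonneg.mpr n.cast_nonneg))

theorem tendsto_measure_of_ae_eventually_mem {Ω : Type*} [MeasurableSpace Ω] {P : Measure Ω}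
    [IsProbabilityMeasure P] {D : ℕ → Set Ω} (h : ∀ᵐ ω ∂P, ∀ᶠ n in atTop, ω ∈ D n) :
    Tendsto (fun n => P (D n)) atTop (𝓝 1) := by
  set E : ℕ → Set Ω := fun N => ⋂ n ≥ N, D n
  have hE_mono : Monotone E := fun N M hNM =>
    Set.biInter_subset_biInter_left fun n hn => hNM.trans hn
  have hE_union : P (⋃ N, E N) = 1 := by
    have hmem : ∀ᵐ ω ∂P, ω ∈ ⋃ N, E N := by
      filter_upwards [h] with ω hω
      obtain ⟨N, hN⟩ := eventually_atTop.mp hω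
      exact Set.mem_iUnion.mpr ⟨N, Set.mem_iInter₂.mpr hN⟩
    rw [measure_congr (ae_eq_univ.mpr (ae_iff.mp hmem)), measure_univ]
  refine tendsto_of_tendsto_of_tendsto_of_le_of_le ?_ tendsto_const_nhds
    (fun N => measure_mono (Set.biInter_subset_of_mem le_rfl)) fun n => prob_le_one
  exact hE_union ▸ tendsto_measure_iUnion_atTop hE_mono

theorem le_liminf_inv_mul_log_measure_of_tilt {Ω : Type*} [MeasurableSpace Ω]
    {P Q : Measure Ω} [IsProbabilityMeasure P] {A : ℕ → Set Ω} {S : ℕ → Ω → ℝ} {c : ℝ}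
    (hA : ∀ᵐ ω ∂P, ∀ᶠ n in atTop, ω ∈ A n)
    (hS : ∀ᵐ ω ∂P, Tendsto (fun n : ℕ => S n ω / n) atTop (𝓝 c))
    (htilt : ∀ n a, ENNReal.ofReal (Real.exp a) * P (A n ∩ {ω | a ≤ S n ω}) ≤ Q (A n)) :
    (c : EReal)
      ≤ liminf (fun n : ℕ => (((n : ℝ)⁻¹ : ℝ) : EReal) * ENNReal.log (Q (A n))) atTop := by
  refine EReal.ge_of_forall_gt_iff_ge.mp fun a ha => ?_
  have hac : a < c := EReal.coe_lt_coe_iff.mp ha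
  have htypical : ∀ᵐ ω ∂P, ∀ᶠ n : ℕ in atTop, ω ∈ A n ∩ {ω | n * a ≤ S n ω} := by
    filter_upwards [hA, hS] with ω hAω hSω
    filter_upwards [hAω, hSω.eventually_const_lt hac, eventually_gt_atTop 0] with n hn hlt hn0
    exact ⟨hn, (le_div_iff₀' (Nat.cast_pos.mpr hn0)).mp hlt.le⟩
  refine le_liminf_inv_mul_log_of_le (δ := 2⁻¹) (by norm_num) ?_
  filter_upwards [(tendsto_measure_of_ae_eventually_mem htypical).eventually_const_lt
    (by norm_num : (2⁻¹ : ℝ≥0∞) < 1)] with n hn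
  calc ENNReal.ofReal (2⁻¹ * Real.exp (n * a))
      = ENNReal.ofReal (Real.exp (n * a)) * 2⁻¹ := by
        rw [mul_comm, ENNReal.ofReal_mul (Real.exp_pos _).le, ENNReal.ofReal_inv_of_pos two_pos,
          ENNReal.ofReal_ofNat]
    _ ≤ ENNReal.ofReal (Real.exp (n * a)) * P (A n ∩ {ω | n * a ≤ S n ω}) := by gcongr
    _ ≤ Q (A n) := htilt n _

theorem chapman_robbins_lower_bound_consistent_general
    {𝔜 Ω Θ : Type*} [MeasurableSpace 𝔜] [MeasurableSpace Ω]
    [MeasurableSpace Θ] [MeasurableSingletonClass Θ]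
    -- A7: dominated model with everywhere positive measurable densities
    (μ : Measure 𝔜)
    (f : Θ → 𝔜 → ℝ)
    (hf_meas : ∀ θ, Measurable (f θ))
    (hf_pos : ∀ θ y, 0 < f θ y)
    (hf_prob : ∀ θ, IsProbabilityMeasure (densModel μ f θ))
    -- the data: for each θ, (Yᵢ) are i.i.d. with law ℙ_θ under Pr θ
    (Pr : Θ → Measure Ω) (hPr : ∀ θ, IsProbabilityMeasure (Pr θ))
    (Y : ℕ → Ω → 𝔜) (hY_meas : ∀ k, Measurable (Y k))
    (hY_law : ∀ θ k, (Pr θ).map (Y k) = densModel μ f θ)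
    (hY_indep : ∀ θ, iIndepFun Y (Pr θ))
    (θ₀ : Θ)
    -- the estimator, strongly consistent at every θ ∈ Θ
    (est : (n : ℕ) → (Fin n → 𝔜) → Θ)
    (hest_meas : ∀ n, Measurable (est n))
    (hcons : ∀ θ : Θ, ∀ᵐ ω ∂(Pr θ), ∀ᶠ n in atTop,
      est n (fun k : Fin n => Y k ω) = θ) :
    Filter.liminf
      (fun n : ℕ => (((n : ℝ)⁻¹ : ℝ) : EReal) *
        ENNReal.log (Pr θ₀ {ω | est n (fun k : Fin n => Y k ω) ≠ θ₀}))
      atTop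
    ≥ ⨆ (θ₁ : Θ) (_ : θ₁ ≠ θ₀),
        extExp (densModel μ f θ₁) (fun y => Real.log (f θ₀ y / f θ₁ y)) := by
  refine iSup₂_le fun θ₁ hθ₁ => ?_
  set g : 𝔜 → ℝ := fun y => Real.log (f θ₀ y / f θ₁ y)
  have hg : Measurable g := ((hf_meas θ₀).div (hf_meas θ₁)).log
  have hdens := densModel_eq_withDensity_exp_log_div μ hf_meas hf_pos θ₀ θ₁
  rcases eq_or_ne (∫⁻ y, ENNReal.ofReal (-g y) ∂densModel μ f θ₁) ⊤ with hneg | hneg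
  · rw [extExp_eq_bot hneg]
    exact bot_le
  have hpos : ∫⁻ y, ENNReal.ofReal (g y) ∂densModel μ f θ₁ ≠ ⊤ :=
    ne_top_of_le_ne_top (by rw [← hdens, measure_univ]; exact ENNReal.one_ne_top)
      (lintegral_ofReal_le_withDensity_exp_univ g)
  have hint := integrable_of_lintegral_ofReal_ne_top hg.aestronglyMeasurable hpos hneg
  rw [extExp_eq_integral hint]
  refine le_liminf_inv_mul_log_measure_of_tilt (P := Pr θ₁) ?_
    (ae_tendsto_sum_range_comp_div (hY_indep θ₁) hY_meas (hY_law θ₁) hg hint) fun n a => ?_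
  · filter_upwards [hcons θ₁] with ω hω
    filter_upwards [hω] with n hn
    simpa [hn] using hθ₁
  · exact exp_mul_measure_le_of_iIndepFun_withDensity hg hY_meas (hY_law θ₁)
      (fun k => (hY_law θ₀ k).trans hdens) (hY_indep θ₁) (hY_indep θ₀) n
      ((hest_meas n) (measurableSet_singleton θ₀).compl) a

/-- **Chapman–Robbins type lower bound for consistent estimators** (Proposition 6, first
part).  Under Assumptions A7 and A9, if `θ̃ⁿ` is strongly consistent (for every `θ`, when
the data are i.i.d. with law `ℙ_θ`, `θ̃ⁿ → θ` `ℙ_θ`-a.s.), then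
`liminf (1/n) ln ℙ_{θ₀}(θ̃ⁿ ≠ θ₀) ≥ sup_{θ₁ ≠ θ₀} E_{θ₁} ln(f(Y;θ₀)/f(Y;θ₁))`,
i.e. the zero–one risk decays at most at the minimal Kullback–Leibler rate. -/
theorem chapman_robbins_lower_bound_consistent
    {𝔜 Ω Θ : Type*} [MeasurableSpace 𝔜] [MeasurableSpace Ω]
    [Fintype Θ] [Nonempty Θ] [MeasurableSpace Θ] [MeasurableSingletonClass Θ]
    -- A7: dominated model with everywhere positive measurable densities
    (μ : Measure 𝔜) [SigmaFinite μ]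
    (f : Θ → 𝔜 → ℝ)
    (hf_meas : ∀ θ, Measurable (f θ))
    (hf_pos : ∀ θ y, 0 < f θ y)
    (hf_prob : ∀ θ, IsProbabilityMeasure (densModel μ f θ))
    -- the data: for each θ, (Yᵢ) are i.i.d. with law ℙ_θ under Pr θ
    (Pr : Θ → Measure Ω) (hPr : ∀ θ, IsProbabilityMeasure (Pr θ))
    (Y : ℕ → Ω → 𝔜) (hY_meas : ∀ k, Measurable (Y k))
    (hY_law : ∀ θ k, (Pr θ).map (Y k) = densModel μ f θ)
    (hY_indep : ∀ θ, iIndepFun Y (Pr θ))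
    -- A9: the true value θ₀ is the unique maximizer of θ ↦ E_{θ₀} ln f(Y; θ)
    (θ₀ : Θ)
    (hA9 : ∀ θ, θ ≠ θ₀ →
      ∫ y, Real.log (f θ y) ∂(densModel μ f θ₀) <
        ∫ y, Real.log (f θ₀ y) ∂(densModel μ f θ₀))
    -- the estimator, strongly consistent at every θ ∈ Θ
    (est : (n : ℕ) → (Fin n → 𝔜) → Θ)
    (hest_meas : ∀ n, Measurable (est n))
    (hcons : ∀ θ : Θ, ∀ᵐ ω ∂(Pr θ), ∀ᶠ n in atTop,
      est n (fun k : Fin n => Y k ω) = θ) :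
    Filter.liminf
      (fun n : ℕ => (((n : ℝ)⁻¹ : ℝ) : EReal) *
        ENNReal.log (Pr θ₀ {ω | est n (fun k : Fin n => Y k ω) ≠ θ₀}))
      atTop
    ≥ ⨆ (θ₁ : Θ) (_ : θ₁ ≠ θ₀),
        extExp (densModel μ f θ₁) (fun y => Real.log (f θ₀ y / f θ₁ y)) :=
  chapman_robbins_lower_bound_consistent_general μ f hf_meas hf_pos hf_prob Pr hPr Y hY_meas hY_law
    hY_indep θ₀ est hest_meas hcons
end

section
/- Under Assumptions A7, A8 and A9, no estimator is superefficient with respect to the MLE under the zero–one risk: for each n, there is no estimator θ̃ⁿ such that ℙ_θ(θ̃ⁿ ≠ θ) ≤ ℙ_θ(θ̂ⁿ ≠ θ) for every θ ∈ Θ and ℙ_{θ*}(θ̃ⁿ ≠ θ*) < ℙ_{θ*}(θ̂ⁿ ≠ θ*) for at least one θ* ∈ Θ. -/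
open MeasureTheory ProbabilityTheory Filter
open scoped ENNReal NNReal

/-- Product lintegral over a finite power measure. -/
theorem aux_lintegral_pi_prod {𝔜 : Type*} [MeasurableSpace 𝔜] (μ : Measure 𝔜) [SigmaFinite μ] :
    ∀ (n : ℕ) (h : Fin n → 𝔜 → ℝ≥0∞), (∀ i, Measurable (h i)) →
    ∫⁻ y : Fin n → 𝔜, ∏ i, h i (y i) ∂(Measure.pi fun _ : Fin n => μ)
      = ∏ i, ∫⁻ t, h i t ∂μ := by
  intro n
  induction n with
  | zero =>
    intro h _
    simp [Measure.pi_univ]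
  | succ n ih =>
    intro h hm
    have hmp := measurePreserving_piFinSuccAbove (fun _ : Fin (n + 1) => μ) 0
    have hFm : Measurable fun z : 𝔜 × (Fin n → 𝔜) =>
        h 0 z.1 * ∏ i, h i.succ (z.2 i) :=
      ((hm 0).comp measurable_fst).mul
        (Finset.measurable_prod _ fun i _ =>
          (hm i.succ).comp ((measurable_pi_apply i).comp measurable_snd))
    have key := hmp.lintegral_comp hFm
    have heq : ∀ y : Fin (n + 1) → 𝔜,
        (fun z : 𝔜 × (Fin n → 𝔜) => h 0 z.1 * ∏ i, h i.succ (z.2 i))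
          ((MeasurableEquiv.piFinSuccAbove (fun _ => 𝔜) 0) y) = ∏ i, h i (y i) := by
      intro y
      simp [MeasurableEquiv.piFinSuccAbove_apply, Fin.prod_univ_succ, Fin.succAbove, Fin.tail]
    calc ∫⁻ y : Fin (n + 1) → 𝔜, ∏ i, h i (y i) ∂(Measure.pi fun _ => μ)
        = ∫⁻ z : 𝔜 × (Fin n → 𝔜), h 0 z.1 * ∏ i, h i.succ (z.2 i)
            ∂(μ.prod (Measure.pi fun _ : Fin n => μ)) := by
          rw [← key]; exact lintegral_congr fun y => (heq y).symm
      _ = (∫⁻ t, h 0 t ∂μ) * ∫⁻ x : Fin n → 𝔜, ∏ i, h i.succ (x i)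
            ∂(Measure.pi fun _ : Fin n => μ) :=
          lintegral_prod_mul (hm 0).aemeasurable
            (Finset.measurable_prod _ fun (i : Fin n) _ =>
              (hm i.succ).comp (measurable_pi_apply i)).aemeasurable
      _ = ∏ i, ∫⁻ t, h i t ∂μ := by
          rw [ih _ fun i => hm i.succ, Fin.prod_univ_succ]

/-- Finite power of a `withDensity` measure. -/
theorem aux_pi_withDensity {𝔜 : Type*} [MeasurableSpace 𝔜] (μ : Measure 𝔜) [SigmaFinite μ]
    (n : ℕ) (h : 𝔜 → ℝ≥0∞) (hm : Measurable h) [SigmaFinite (μ.withDensity h)] :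
    (Measure.pi fun _ : Fin n => μ.withDensity h)
      = (Measure.pi fun _ : Fin n => μ).withDensity fun y => ∏ i, h (y i) := by
  refine Measure.pi_eq fun s hs => ?_
  have hG : Measurable fun y : Fin n → 𝔜 => ∏ i, h (y i) :=
    Finset.measurable_prod _ fun i _ => hm.comp (measurable_pi_apply i)
  rw [withDensity_apply _ (MeasurableSet.univ_pi hs), ← lintegral_indicator (MeasurableSet.univ_pi hs)]
  have : ∀ y : Fin n → 𝔜, (Set.pi Set.univ s).indicator (fun y => ∏ i, h (y i)) y
      = ∏ i, (s i).indicator h (y i) := by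
    intro y
    by_cases hy : y ∈ Set.pi Set.univ s
    · rw [Set.indicator_of_mem hy]
      exact Finset.prod_congr rfl fun i _ =>
        (Set.indicator_of_mem (hy i (Set.mem_univ i)) h).symm
    · rw [Set.indicator_of_notMem hy]
      obtain ⟨i, hi⟩ := not_forall.1 fun hc => hy fun i _ => hc i
      exact (Finset.prod_eq_zero (Finset.mem_univ i)
        (Set.indicator_of_notMem hi h)).symm
  rw [lintegral_congr this,
    aux_lintegral_pi_prod μ n _ fun i => hm.indicator (hs i)]
  exact Finset.prod_congr rfl fun i _ => by
    rw [withDensity_apply _ (hs i), ← lintegral_indicator (hs i)]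

/-- **No estimator is superefficient with respect to the MLE under zero–one loss**
(Proposition 11(ii)).  Under Assumptions A7, A8 and A9, for each `n` there is no
estimator `θ̃ⁿ` such that `ℙ_θ(θ̃ⁿ ≠ θ) ≤ ℙ_θ(θ̂ⁿ ≠ θ)` for every `θ ∈ Θ` and
`ℙ_{θ*}(θ̃ⁿ ≠ θ*) < ℙ_{θ*}(θ̂ⁿ ≠ θ*)` for at least one `θ* ∈ Θ`. -/
theorem no_estimator_superefficient_wrt_mle
    {𝔜 Θ : Type*} [MeasurableSpace 𝔜]
    [Fintype Θ] [Nonempty Θ] [MeasurableSpace Θ] [MeasurableSingletonClass Θ]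
    -- A7: dominated model with everywhere positive measurable densities
    (μ : Measure 𝔜) [SigmaFinite μ]
    (f : Θ → 𝔜 → ℝ)
    (hf_meas : ∀ θ, Measurable (f θ))
    (hf_pos : ∀ θ y, 0 < f θ y)
    (hf_prob : ∀ θ, IsProbabilityMeasure (densModel μ f θ))
    -- A8: integrability of the log densities
    (hA8 : ∀ θ θ' : Θ, Integrable (fun y => Real.log (f θ' y)) (densModel μ f θ))
    -- A9: each θ is the unique maximizer of θ' ↦ E_θ ln f(Y; θ')
    (hA9 : ∀ θ θ' : Θ, θ' ≠ θ →
      ∫ y, Real.log (f θ' y) ∂(densModel μ f θ) <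
        ∫ y, Real.log (f θ y) ∂(densModel μ f θ))
    -- the MLE θ̂ⁿ: a measurable maximizer of the log likelihood
    (mle : (n : ℕ) → (Fin n → 𝔜) → Θ)
    (hmle_meas : ∀ n, Measurable (mle n))
    (hmle_max : ∀ n (y : Fin n → 𝔜) (θ : Θ),
      ∑ i, Real.log (f θ (y i)) ≤ ∑ i, Real.log (f (mle n y) (y i))) :
    ∀ n : ℕ, ¬ ∃ est : (Fin n → 𝔜) → Θ, Measurable est ∧
      (∀ θ : Θ, (Measure.pi fun _ : Fin n => densModel μ f θ) {y | est y ≠ θ}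
          ≤ (Measure.pi fun _ : Fin n => densModel μ f θ) {y | mle n y ≠ θ}) ∧
      (∃ θstar : Θ, (Measure.pi fun _ : Fin n => densModel μ f θstar) {y | est y ≠ θstar}
          < (Measure.pi fun _ : Fin n => densModel μ f θstar) {y | mle n y ≠ θstar}) := by
  classical
  intro n
  rintro ⟨est, hest, hle, θs, hlt⟩
  haveI := hf_prob
  set P : Θ → Measure (Fin n → 𝔜) :=
    fun θ => Measure.pi fun _ : Fin n => densModel μ f θ with hPdef
  haveI : ∀ θ, IsProbabilityMeasure (P θ) := fun θ => by
    rw [hPdef]; infer_instance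
  set ν : Measure (Fin n → 𝔜) := Measure.pi fun _ : Fin n => μ with hνdef
  set g : Θ → (Fin n → 𝔜) → ℝ≥0∞ :=
    fun θ y => ∏ i, ENNReal.ofReal (f θ (y i)) with hgdef
  have hg_meas : ∀ θ, Measurable (g θ) := fun θ =>
    Finset.measurable_prod _ fun i _ =>
      (ENNReal.measurable_ofReal.comp (hf_meas θ)).comp (measurable_pi_apply i)
  -- the power measure is withDensity of the power of μ
  have hP : ∀ θ, P θ = ν.withDensity (g θ) := fun θ => by
    haveI : SigmaFinite (μ.withDensity fun y => ENNReal.ofReal (f θ y)) := by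
      have := hf_prob θ
      unfold densModel at this
      infer_instance
    exact aux_pi_withDensity μ n _ (ENNReal.measurable_ofReal.comp (hf_meas θ))
  -- key representation of ∑ θ, P θ {φ = θ}
  have key : ∀ φ : (Fin n → 𝔜) → Θ, Measurable φ →
      ∑ θ : Θ, P θ {y | φ y = θ} = ∫⁻ y, g (φ y) y ∂ν := by
    intro φ hφ
    have hsm : ∀ θ : Θ, MeasurableSet {y | φ y = θ} :=
      fun θ => hφ (measurableSet_singleton θ)
    have h1 : ∀ θ : Θ, P θ {y | φ y = θ}
        = ∫⁻ y, ({y | φ y = θ}).indicator (g θ) y ∂ν := by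
      intro θ
      rw [hP θ, withDensity_apply _ (hsm θ), ← lintegral_indicator (hsm θ)]
    calc ∑ θ : Θ, P θ {y | φ y = θ}
        = ∑ θ : Θ, ∫⁻ y, ({y | φ y = θ}).indicator (g θ) y ∂ν :=
          Finset.sum_congr rfl fun θ _ => h1 θ
      _ = ∫⁻ y, ∑ θ : Θ, ({y | φ y = θ}).indicator (g θ) y ∂ν :=
          (lintegral_finset_sum _ fun θ _ => ((hg_meas θ).indicator (hsm θ))).symm
      _ = ∫⁻ y, g (φ y) y ∂ν := by
          refine lintegral_congr fun y => ?_
          rw [Finset.sum_eq_single (φ y)]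
          · exact Set.indicator_of_mem (show y ∈ {y' | φ y' = φ y} from rfl) (g (φ y))
          · intro θ _ hθ
            exact Set.indicator_of_notMem (fun (hc : y ∈ {y' | φ y' = θ}) => hθ (Eq.symm hc)) (g θ)
          · intro hc
            exact absurd (Finset.mem_univ _) hc
  -- pointwise likelihood comparison
  have hpt : ∀ y : Fin n → 𝔜, g (est y) y ≤ g (mle n y) y := by
    intro y
    have hprod : ∀ θ : Θ, ∏ i, f θ (y i) = Real.exp (∑ i, Real.log (f θ (y i))) := by
      intro θ
      rw [Real.exp_sum]
      exact Finset.prod_congr rfl fun i _ => (Real.exp_log (hf_pos θ (y i))).symm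
    have h1 : ∀ θ : Θ, g θ y = ENNReal.ofReal (∏ i, f θ (y i)) := fun θ =>
      (ENNReal.ofReal_prod_of_nonneg fun i _ => (hf_pos θ (y i)).le).symm
    rw [h1, h1, hprod, hprod]
    exact ENNReal.ofReal_le_ofReal (Real.exp_le_exp.2 (hmle_max n y (est y)))
  -- the MLE has no larger total risk
  have hsum : ∑ θ : Θ, P θ {y | est y = θ} ≤ ∑ θ : Θ, P θ {y | mle n y = θ} := by
    rw [key est hest, key (mle n) (hmle_meas n)]
    exact lintegral_mono fun y => hpt y
  -- convert the domination hypothesis to equalities about "correct" sets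
  have hcompl : ∀ (φ : (Fin n → 𝔜) → Θ) (θ : Θ), Measurable φ →
      P θ {y | φ y ≠ θ} = 1 - P θ {y | φ y = θ} := by
    intro φ θ hφ
    have : {y | φ y ≠ θ} = {y | φ y = θ}ᶜ := rfl
    rw [this]
    exact prob_compl_eq_one_sub
      (show MeasurableSet {y | φ y = θ} from hφ (measurableSet_singleton θ))
  have hone : ∀ (θ : Θ) (s : Set (Fin n → 𝔜)), P θ s ≤ 1 := fun θ s => prob_le_one
  have hterm : ∀ θ : Θ, P θ {y | mle n y = θ} ≤ P θ {y | est y = θ} := by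
    intro θ
    have h := hle θ
    rw [hcompl est θ hest, hcompl (mle n) θ (hmle_meas n)] at h
    calc P θ {y | mle n y = θ}
        = 1 - (1 - P θ {y | mle n y = θ}) :=
          (ENNReal.sub_sub_cancel ENNReal.one_ne_top (hone θ _)).symm
      _ ≤ 1 - (1 - P θ {y | est y = θ}) := tsub_le_tsub_left h 1
      _ = P θ {y | est y = θ} :=
          ENNReal.sub_sub_cancel ENNReal.one_ne_top (hone θ _)
  have hterm_lt : P θs {y | mle n y = θs} < P θs {y | est y = θs} := by
    by_contra hc
    push_neg at hc
    have h2 : P θs {y | mle n y ≠ θs} ≤ P θs {y | est y ≠ θs} := by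
      rw [hcompl est θs hest, hcompl (mle n) θs (hmle_meas n)]
      exact tsub_le_tsub_left hc 1
    exact absurd hlt (not_lt.2 h2)
  -- contradiction via real-valued sums
  have hne : ∀ (θ : Θ) (s : Set (Fin n → 𝔜)), P θ s ≠ ∞ :=
    fun θ s => ((hone θ s).trans_lt ENNReal.one_lt_top).ne
  have hsumR : ∑ θ : Θ, (P θ {y | est y = θ}).toReal
      ≤ ∑ θ : Θ, (P θ {y | mle n y = θ}).toReal := by
    rw [← ENNReal.toReal_sum (fun θ _ => hne θ _), ← ENNReal.toReal_sum (fun θ _ => hne θ _)]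
    exact ENNReal.toReal_mono (ENNReal.sum_ne_top.2 fun θ _ => hne θ _) hsum
  have hsumR' : ∑ θ : Θ, (P θ {y | mle n y = θ}).toReal
      < ∑ θ : Θ, (P θ {y | est y = θ}).toReal := by
    refine Finset.sum_lt_sum (fun θ _ => ?_) ⟨θs, Finset.mem_univ θs, ?_⟩
    · exact ENNReal.toReal_mono (hne θ _) (hterm θ)
    · exact ENNReal.toReal_strict_mono (hne θs _) hterm_lt
  linarith
end
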